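/- Let D⋆ be a global minimizer of J̃ over K, set H⋆ = C − (1/2)[[A,D⋆],A], and let D̃ ∈ K satisfy Tr(H⋆ D̃) = Tr(H⋆ D⋆) (i.e. D̃ also minimizes the linear functional D ↦ Tr(H⋆ D) over K). Then D̃ is a global minimizer of J̃ over K if and only if [A, D⋆ − D̃] = 0. -/

import Mathlib

/-!
`J̃` is quadratic, so it equals its second-order Taylor expansion at `D⋆`:
`J̃(D) = J̃(D⋆) + Tr(H⋆ (D − D⋆)) + ¼‖[A, D − D⋆]‖²`, where `H⋆` is the gradient of `J̃` at `D⋆`.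
When `Tr(H⋆ D̃) = Tr(H⋆ D⋆)` the linear term vanishes, so `J̃(D̃) = J̃(D⋆) + ¼‖[A, D⋆ − D̃]‖²`,
and `D̃` attains the minimum value `J̃(D⋆)` exactly when that commutator vanishes.
-/

open Matrix Filter Topology

noncomputable section

/-- Commutator of matrices. -/
def commut {M : ℕ} (X Y : Matrix (Fin M) (Fin M) ℝ) : Matrix (Fin M) (Fin M) ℝ :=
  X * Y - Y * X

/-- `K = CH(Gr(m,ℝ^M))`: symmetric `D` with `0 ⪯ D ⪯ I` and `Tr D = m`. -/
def Kset (M m : ℕ) (D : Matrix (Fin M) (Fin M) ℝ) : Prop :=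
  D.PosSemidef ∧ (1 - D).PosSemidef ∧ D.trace = (m : ℝ)

/-- Squared Frobenius norm `‖X‖² = Tr(Xᵀ X)`. -/
def fnormSq {M : ℕ} (X : Matrix (Fin M) (Fin M) ℝ) : ℝ := (Xᵀ * X).trace

/-- The convexified functional `J̃(D) = Tr(CD) + (1/4)‖[A,D]‖²` with `C = B − (1/2)A²`. -/
def Jt {M : ℕ} (A B D : Matrix (Fin M) (Fin M) ℝ) : ℝ :=
  ((B - (1 / 2 : ℝ) • (A * A)) * D).trace + (1 / 4) * fnormSq (commut A D)

variable {M : ℕ}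

lemma fnormSq_nonneg (X : Matrix (Fin M) (Fin M) ℝ) : 0 ≤ fnormSq X := by
  simpa [fnormSq] using (posSemidef_conjTranspose_mul_self X).trace_nonneg

lemma fnormSq_eq_zero_iff {X : Matrix (Fin M) (Fin M) ℝ} : fnormSq X = 0 ↔ X = 0 := by
  simpa [fnormSq] using trace_conjTranspose_mul_self_eq_zero_iff (A := X)

lemma fnormSq_neg (X : Matrix (Fin M) (Fin M) ℝ) : fnormSq (-X) = fnormSq X := by
  simp [fnormSq]

lemma fnormSq_add (P Q : Matrix (Fin M) (Fin M) ℝ) :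
    fnormSq (P + Q) = fnormSq P + fnormSq Q + 2 * (Pᵀ * Q).trace := by
  have hswap : (Qᵀ * P).trace = (Pᵀ * Q).trace := by
    rw [← trace_transpose, transpose_mul, transpose_transpose]
  simp only [fnormSq, transpose_add, add_mul, mul_add, trace_add]
  linarith

lemma commut_sub_right (X Y Z : Matrix (Fin M) (Fin M) ℝ) :
    commut X (Y - Z) = commut X Y - commut X Z := by
  simp only [commut, mul_sub, sub_mul]
  abel

lemma commut_swap (X Y : Matrix (Fin M) (Fin M) ℝ) : commut Y X = -commut X Y := by
  simp [commut]

lemma transpose_commut (X Y : Matrix (Fin M) (Fin M) ℝ) : (commut X Y)ᵀ = commut Yᵀ Xᵀ := by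
  simp [commut]

lemma trace_commut_mul (X Y Z : Matrix (Fin M) (Fin M) ℝ) :
    (commut X Y * Z).trace = (X * commut Y Z).trace := by
  simp only [commut, sub_mul, mul_sub, trace_sub, Matrix.mul_assoc]
  rw [trace_mul_comm Y (X * Z), Matrix.mul_assoc]

lemma fnormSq_commut_sub_comm (A X Y : Matrix (Fin M) (Fin M) ℝ) :
    fnormSq (commut A (X - Y)) = fnormSq (commut A (Y - X)) := by
  rw [commut_sub_right, commut_sub_right, ← neg_sub (commut A X), fnormSq_neg]

/-- The gradient of `J̃` at `D`; the paper's `H⋆` is `gradJt A B D⋆`. -/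
def gradJt (A B D : Matrix (Fin M) (Fin M) ℝ) : Matrix (Fin M) (Fin M) ℝ :=
  (B - (1 / 2 : ℝ) • (A * A)) - (1 / 2 : ℝ) • commut (commut A D) A

lemma Jt_eq_add_trace_gradJt_add {A D₀ : Matrix (Fin M) (Fin M) ℝ} (hA : A.IsSymm)
    (hD₀ : D₀.IsSymm) (B D : Matrix (Fin M) (Fin M) ℝ) :
    Jt A B D = Jt A B D₀ + (gradJt A B D₀ * (D - D₀)).trace
      + 1 / 4 * fnormSq (commut A (D - D₀)) := by
  set P := commut A D₀
  have hsplit : commut A D = P + commut A (D - D₀) := by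
    rw [commut_sub_right]
    abel
  -- `Pᵀ = -P` for symmetric `A`, `D₀`, and the trace form is invariant under `ad A`.
  have hcross : (Pᵀ * commut A (D - D₀)).trace = -(commut P A * (D - D₀)).trace := by
    rw [transpose_commut, hA.eq, hD₀.eq, commut_swap, neg_mul, trace_neg, ← trace_commut_mul]
  simp only [Jt, gradJt, hsplit, fnormSq_add, hcross, mul_sub, sub_mul, trace_sub, smul_mul,
    trace_smul, smul_eq_mul]
  ring

lemma Jt_eq_add_fnormSq_of_trace_gradJt_eq {A D₀ D : Matrix (Fin M) (Fin M) ℝ} (hA : A.IsSymm)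
    (hD₀ : D₀.IsSymm) (B : Matrix (Fin M) (Fin M) ℝ)
    (h : (gradJt A B D₀ * D).trace = (gradJt A B D₀ * D₀).trace) :
    Jt A B D = Jt A B D₀ + 1 / 4 * fnormSq (commut A (D₀ - D)) := by
  rw [Jt_eq_add_trace_gradJt_add hA hD₀ B D, mul_sub, trace_sub, h, sub_self, add_zero,
    fnormSq_commut_sub_comm]

theorem stmt_7_general {M m : ℕ}
    (A B : Matrix (Fin M) (Fin M) ℝ) (hA : A.IsSymm)
    (Dstar : Matrix (Fin M) (Fin M) ℝ) (hDstar : Kset M m Dstar)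
    (hmin : ∀ D : Matrix (Fin M) (Fin M) ℝ, Kset M m D → Jt A B Dstar ≤ Jt A B D)
    (Hstar : Matrix (Fin M) (Fin M) ℝ)
    (hH : Hstar = (B - (1 / 2 : ℝ) • (A * A)) - (1 / 2 : ℝ) • commut (commut A Dstar) A)
    (Dtil : Matrix (Fin M) (Fin M) ℝ)
    (htr : (Hstar * Dtil).trace = (Hstar * Dstar).trace) :
    (∀ D : Matrix (Fin M) (Fin M) ℝ, Kset M m D → Jt A B Dtil ≤ Jt A B D) ↔
      commut A (Dstar - Dtil) = 0 := by
  have hJ : Jt A B Dtil = Jt A B Dstar + 1 / 4 * fnormSq (commut A (Dstar - Dtil)) :=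
    Jt_eq_add_fnormSq_of_trace_gradJt_eq hA (isHermitian_iff_isSymm.mp hDstar.1.isHermitian) B
      (by subst hH; exact htr)
  constructor
  · intro hDtil_min
    apply fnormSq_eq_zero_iff.mp
    linarith [hDtil_min Dstar hDstar, fnormSq_nonneg (commut A (Dstar - Dtil))]
  · intro hcomm D hD
    rw [hJ, hcomm, fnormSq_eq_zero_iff.mpr rfl, mul_zero, add_zero]
    exact hmin D hD

/-- let `D⋆` be a global minimizer of `J̃` over `K`,
`H⋆ = C − (1/2)[[A,D⋆],A]`, and `D̃ ∈ K` with `Tr(H⋆ D̃) = Tr(H⋆ D⋆)`. Then `D̃` is a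
global minimizer of `J̃` over `K` iff `[A, D⋆ − D̃] = 0`. -/
theorem stmt_7 {M m : ℕ} (hM : 2 ≤ M) (hm1 : 1 ≤ m) (hm2 : m ≤ M - 1)
    (A B : Matrix (Fin M) (Fin M) ℝ) (hA : A.IsSymm) (hApsd : A.PosSemidef)
    (hB : B.IsSymm) (Dstar : Matrix (Fin M) (Fin M) ℝ) (hDstar : Kset M m Dstar)
    (hmin : ∀ D : Matrix (Fin M) (Fin M) ℝ, Kset M m D → Jt A B Dstar ≤ Jt A B D)
    (Hstar : Matrix (Fin M) (Fin M) ℝ)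
    (hH : Hstar = (B - (1 / 2 : ℝ) • (A * A)) - (1 / 2 : ℝ) • commut (commut A Dstar) A)
    (Dtil : Matrix (Fin M) (Fin M) ℝ) (hDtil : Kset M m Dtil)
    (htr : (Hstar * Dtil).trace = (Hstar * Dstar).trace) :
    (∀ D : Matrix (Fin M) (Fin M) ℝ, Kset M m D → Jt A B Dtil ≤ Jt A B D) ↔
      commut A (Dstar - Dtil) = 0 :=
  stmt_7_general A B hA Dstar hDstar hmin Hstar hH Dtil htr
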